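/- For a simplicial group G, the simplicial map S_G : W̄G → Diag NG is a section of D_G : Diag NG → W̄G, i.e., (S_G)_n (D_G)_n = id_{W̄_n G} for all n. In particular D_G is a retraction of simplicial sets. -/

import Mathlib

namespace Paper

/-- clamped coface map `δ^k : [a] → [b]`. -/
def δOH (k a b : ℕ) : Fin (a+1) →o Fin (b+1) where
  toFun i := ⟨min (if (i:ℕ) < k then (i:ℕ) else (i:ℕ)+1) b, Nat.lt_succ_of_le (Nat.min_le_right _ _)⟩
  monotone' := by
    intro i j hij
    have h : (i:ℕ) ≤ (j:ℕ) := hij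
    simp only [Fin.mk_le_mk]
    split_ifs <;> omega

/-- clamped codegeneracy map `σ^k : [a] → [b]`. -/
def σOH (k a b : ℕ) : Fin (a+1) →o Fin (b+1) where
  toFun i := ⟨min (if (i:ℕ) ≤ k then (i:ℕ) else (i:ℕ)-1) b, Nat.lt_succ_of_le (Nat.min_le_right _ _)⟩
  monotone' := by
    intro i j hij
    have h : (i:ℕ) ≤ (j:ℕ) := hij
    simp only [Fin.mk_le_mk]
    split_ifs <;> omega

/-- `τ^k : [n] → [1]`, sending `[0, n-k]` to `0` and the rest to `1`. -/
def τOH (n k : ℕ) : Fin (n+1) →o Fin 2 where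
  toFun i := if (i:ℕ) + k ≤ n then 0 else 1
  monotone' := by
    intro i j hij
    have h : (i:ℕ) ≤ (j:ℕ) := hij
    dsimp only
    split_ifs with h1 h2 h3
    · exact le_refl _
    · exact Fin.zero_le _
    · exact absurd h3 (by omega)
    · exact le_refl _

/-- application of `θ : [m] → [n]` to a natural number (clamped). -/
def fApp {m n : ℕ} (θ : Fin (m+1) →o Fin (n+1)) (x : ℕ) : ℕ :=
  (θ ⟨min x m, Nat.lt_succ_of_le (Nat.min_le_right _ _)⟩ : Fin (n+1))

theorem fApp_mono {m n : ℕ} (θ : Fin (m+1) →o Fin (n+1)) {x y : ℕ} (h : x ≤ y) :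
    fApp θ x ≤ fApp θ y :=
  Fin.le_def.mp (θ.monotone (Fin.mk_le_mk.mpr (by omega)))

theorem fApp_le {m n : ℕ} (θ : Fin (m+1) →o Fin (n+1)) (x : ℕ) : fApp θ x ≤ n :=
  Nat.lt_succ_iff.mp (Fin.isLt _)

theorem fApp_coe {m n : ℕ} (θ : Fin (m+1) →o Fin (n+1)) (p : Fin (m+1)) :
    fApp θ (p:ℕ) = (θ p : ℕ) := by
  have hp : (⟨min (p:ℕ) m, Nat.lt_succ_of_le (Nat.min_le_right _ _)⟩ : Fin (m+1)) = p :=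
    Fin.ext (show min (p:ℕ) m = (p:ℕ) from by have := p.isLt; omega)
  unfold fApp
  rw [hp]

/-- `Spl_{≤ p}(θ) : [p] → [pθ]`. -/
def splLe {m n : ℕ} (θ : Fin (m+1) →o Fin (n+1)) (p : Fin (m+1)) :
    Fin ((p:ℕ)+1) →o Fin ((θ p : ℕ)+1) where
  toFun i := ⟨fApp θ (i:ℕ), by
    have h1 : fApp θ (i:ℕ) ≤ fApp θ (p:ℕ) := fApp_mono θ (by have := i.isLt; omega)
    have h2 : fApp θ (p:ℕ) = (θ p : ℕ) := fApp_coe θ p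
    omega⟩
  monotone' := by
    intro a b hab
    have h : (a:ℕ) ≤ (b:ℕ) := hab
    simp only [Fin.mk_le_mk]
    exact fApp_mono θ h

/-- `Spl_{≥ p}(θ) : [m-p] → [n-pθ]`. -/
def splGe {m n : ℕ} (θ : Fin (m+1) →o Fin (n+1)) (p : Fin (m+1)) :
    Fin (m - (p:ℕ) + 1) →o Fin (n - (θ p : ℕ) + 1) where
  toFun i := ⟨fApp θ ((i:ℕ) + (p:ℕ)) - (θ p : ℕ), by
    have h1 : fApp θ ((i:ℕ) + (p:ℕ)) ≤ n := fApp_le θ _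
    omega⟩
  monotone' := by
    intro a b hab
    have h : (a:ℕ) ≤ (b:ℕ) := hab
    simp only [Fin.mk_le_mk]
    have := fApp_mono θ (show (a:ℕ) + (p:ℕ) ≤ (b:ℕ) + (p:ℕ) by omega)
    omega

/-- the restriction `θ|_[i]^[j] : [i] → [j]` of `θ` (clamped). -/
def restrictOH {m n : ℕ} (θ : Fin (m+1) →o Fin (n+1)) (i j : ℕ) : Fin (i+1) →o Fin (j+1) where
  toFun k := ⟨min (fApp θ (k:ℕ)) j, Nat.lt_succ_of_le (Nat.min_le_right _ _)⟩
  monotone' := by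
    intro a b hab
    have h : (a:ℕ) ≤ (b:ℕ) := hab
    simp only [Fin.mk_le_mk]
    have := fApp_mono θ h
    omega

/-- ascending product `f a * f (a+1) * ⋯ * f (b-1)`. -/
def aProd {γ : Type*} [Monoid γ] (f : ℕ → γ) (a : ℕ) : ℕ → γ
  | 0 => 1
  | b+1 => if a ≤ b then aProd f a b * f b else 1

/-- descending product `f (b-1) * f (b-2) * ⋯ * f a`. -/
def dProd {γ : Type*} [Monoid γ] (f : ℕ → γ) (a : ℕ) : ℕ → γ
  | 0 => 1
  | b+1 => if a ≤ b then f b * dProd f a b else 1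

end Paper
namespace Paper

/-- A simplicial group, given by levels, structure maps, functoriality,
and levelwise multiplicativity. -/
structure SGrp where
  obj : ℕ → Type
  grp : ∀ n, Group (obj n)
  map : ∀ {m n : ℕ}, (Fin (m+1) →o Fin (n+1)) → obj n → obj m
  map_id : ∀ {n : ℕ} (x : obj n), map OrderHom.id x = x
  map_comp : ∀ {l m n : ℕ} (α : Fin (l+1) →o Fin (m+1)) (β : Fin (m+1) →o Fin (n+1)) (x : obj n),
    map α (map β x) = map (β.comp α) x
  map_mul : ∀ {m n : ℕ} (θ : Fin (m+1) →o Fin (n+1)) (x y : obj n),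
    map θ (x * y) = map θ x * map θ y

attribute [instance] SGrp.grp

namespace SGrp

/-- face `d_k : G_N → G_{N-1}` -/
def face (G : SGrp) (k : ℕ) {N : ℕ} : G.obj N → G.obj (N-1) := G.map (δOH k (N-1) N)

/-- degeneracy `s_k : G_M → G_{M+1}` -/
def deg (G : SGrp) (k : ℕ) {M : ℕ} : G.obj M → G.obj (M+1) := G.map (σOH k (M+1) M)

/-- transport between levels (junk value `1` when levels differ). -/
def gcast (G : SGrp) {a : ℕ} (b : ℕ) (x : G.obj a) : G.obj b := if h : a = b then h ▸ x else 1

/-- descending composite of faces `d_{i+c} d_{i+c-1} ⋯ d_{i+1}`. -/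
def dcomp (G : SGrp) : (i c : ℕ) → {N : ℕ} → G.obj N → G.obj (N - c)
  | _, 0, _, x => x
  | i, c+1, _, x => G.face (i+1) (G.dcomp (i+1) c x)

/-- ascending composite of degeneracies `s_i s_{i+1} ⋯ s_{i+c-1}`. -/
def scomp (G : SGrp) : (i c : ℕ) → {M : ℕ} → G.obj M → G.obj (M + c)
  | _, 0, _, x => x
  | i, c+1, _, x => G.deg (i+c) (G.scomp i c x)

/-- `x ↦ x d_j ⋯ d_{i+1} s_i ⋯ s_{j-1}`, an endomap of `G_N`. -/
def ds (G : SGrp) (i j : ℕ) {N : ℕ} (x : G.obj N) : G.obj N :=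
  G.gcast N (G.scomp i (min (j - i) N) (G.dcomp i (min (j - i) N) x))

/-- `x ↦ x d_j ⋯ d_{i+1} s_i ⋯ s_{n-1} : G_j → G_n`. -/
def dsTo (G : SGrp) (i n : ℕ) {j : ℕ} (x : G.obj j) : G.obj n :=
  G.gcast n (G.scomp i (n - i) (G.gcast i (G.dcomp i (j - i) x)))

/-- the `y_i` of the section `S_G`, defined by descending recursion (with fuel). -/
def yAux (G : SGrp) (n : ℕ) (g : ∀ j : ℕ, G.obj j) : ℕ → ℕ → G.obj n
  | 0, _ => 1
  | fuel+1, i =>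
      aProd (fun j => G.ds i j (G.yAux n g fuel j)⁻¹) (i+1) n *
      dProd (fun j => G.dsTo i n (g j)) i n

/-- `W̄_n G = ∏_{j = n-1}^{0} G_j`. -/
def WbarN (G : SGrp) (n : ℕ) : Type := ∀ j : Fin n, G.obj (j:ℕ)

/-- extension of a tuple in `W̄_n G` by `1`. -/
def gE (G : SGrp) {n : ℕ} (g : G.WbarN n) : ∀ j : ℕ, G.obj j :=
  fun j => if h : j < n then g ⟨j, h⟩ else 1

/-- the coretraction `(S_G)_n : W̄_n G → Diag_n NG = (G_n)^n`. -/
def SGn (G : SGrp) (n : ℕ) (g : G.WbarN n) : Fin n → G.obj n :=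
  fun i => G.yAux n (G.gE g) n (i:ℕ)

/-- extension of a tuple in `(G_n)^n` by `1`. -/
def xE (G : SGrp) {n : ℕ} (x : Fin n → G.obj n) : ℕ → G.obj n :=
  fun j => if h : j < n then x ⟨j, h⟩ else 1

/-- the structure map `W̄_θ : W̄_n G → W̄_m G` of the Kan classifying simplicial set. -/
def wbarMap (G : SGrp) {m n : ℕ} (θ : Fin (m+1) →o Fin (n+1)) (g : G.WbarN n) : G.WbarN m :=
  fun i => dProd (fun j => G.map (restrictOH θ (i:ℕ) j) (G.gE g j))
    ((θ i.castSucc : Fin (n+1)) : ℕ) ((θ i.succ : Fin (n+1)) : ℕ)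

/-- the structure map `(Diag NG)_θ : (G_n)^n → (G_m)^m` of the diagonal of the nerve. -/
def diagMap (G : SGrp) {m n : ℕ} (θ : Fin (m+1) →o Fin (n+1)) (x : Fin n → G.obj n) :
    Fin m → G.obj m :=
  fun i => dProd (fun j => G.map θ (G.xE x j))
    ((θ i.castSucc : Fin (n+1)) : ℕ) ((θ i.succ : Fin (n+1)) : ℕ)

/-- the retraction `(D_G)_n : Diag_n NG → W̄_n G`, `(g_i)_i ↦ (g_i d_n ⋯ d_{i+1})_i`. -/
def DGn (G : SGrp) (n : ℕ) (x : Fin n → G.obj n) : G.WbarN n :=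
  fun i => G.gcast (i:ℕ) (G.dcomp (i:ℕ) (n - (i:ℕ)) (x i))

/-- the components `y_i^{(n+1-k)}` of the homotopy `H`, by descending recursion (with fuel). -/
def hAux (G : SGrp) (n k : ℕ) (g : ℕ → G.obj n) : ℕ → ℕ → G.obj n
  | 0, _ => 1
  | fuel+1, i =>
      if k ≤ i + 1 then g i
      else
        aProd (fun j => G.ds i j (G.hAux n k g fuel j)⁻¹) (i+1) (k-1) *
        dProd (fun j => G.ds i (k-1) (g j)) i (k-1)

end SGrp

/-- recover `k` from the simplex `τ^{n+1-k} ∈ Δ^1_n`: the number of vertices sent to `0`. -/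
def kOf {n : ℕ} (t : Fin (n+1) →o Fin 2) : ℕ :=
  (Finset.univ.filter (fun i => t i = 0)).card

namespace SGrp

/-- the homotopy `H_n : Diag_n NG × Δ^1_n → Diag_n NG`. -/
def Hn (G : SGrp) (n : ℕ) (x : Fin n → G.obj n) (t : Fin (n+1) →o Fin 2) : Fin n → G.obj n :=
  fun i => G.hAux n (kOf t) (G.xE x) (n+1) (i:ℕ)

end SGrp

/-- morphisms of simplicial groups. -/
structure SGrpHom (G G' : SGrp) where
  app : ∀ n, G.obj n → G'.obj n
  comm : ∀ {m n : ℕ} (θ : Fin (m+1) →o Fin (n+1)) (x : G.obj n),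
    app m (G.map θ x) = G'.map θ (app n x)
  mul : ∀ (n : ℕ) (x y : G.obj n), app n (x * y) = app n x * app n y

end Paper

/-!
Every operator occurring in `S_G` and `D_G` is `G.map` of an explicit monotone map, so identities
between them are identities between monotone maps of finite ordinals, checked pointwise. The
`i`-th component of `D_G` is restriction along the inclusion `ι : [i] ↪ [n]`. Precomposed with `ι`,
the map behind `x ↦ x d_j ⋯ d_{i+1} s_i ⋯ s_{j-1}` (collapsing `[i, j]` onto `i`) becomes `ι`
again, and the one behind `x ↦ x d_j ⋯ d_{i+1} s_i ⋯ s_{n-1}` becomes `[i] ↪ [j]`. So, by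
descending induction on `i`, restricting the defining formula of `y_i` along `ι` gives the
telescoping product `t_{i+1}⁻¹ ⋯ t_{n-1}⁻¹ · t_{n-1} ⋯ t_i = t_i = g_i`, where `t_j` is `g_j`
restricted to `[i]`.
-/

namespace Paper

section Prods
variable {M N : Type*} [Monoid M] [Monoid N]

theorem aProd_congr {f f' : ℕ → M} {a : ℕ} :
    ∀ {b}, (∀ j, a ≤ j → j < b → f j = f' j) → aProd f a b = aProd f' a b
  | 0, _ => rfl
  | b + 1, h => by
    simp only [aProd]
    split_ifs with hab
    · rw [aProd_congr fun j hj hjb => h j hj (by omega), h b hab (by omega)]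
    · rfl

theorem dProd_congr {f f' : ℕ → M} {a : ℕ} :
    ∀ {b}, (∀ j, a ≤ j → j < b → f j = f' j) → dProd f a b = dProd f' a b
  | 0, _ => rfl
  | b + 1, h => by
    simp only [dProd]
    split_ifs with hab
    · rw [dProd_congr fun j hj hjb => h j hj (by omega), h b hab (by omega)]
    · rfl

theorem dProd_self (f : ℕ → M) : ∀ a, dProd f a a = 1
  | 0 => rfl
  | a + 1 => if_neg (by omega)

theorem map_aProd (φ : M →* N) (f : ℕ → M) (a : ℕ) :
    ∀ b, φ (aProd f a b) = aProd (fun j => φ (f j)) a b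
  | 0 => φ.map_one
  | b + 1 => by
    simp only [aProd]
    split_ifs
    · rw [φ.map_mul, map_aProd φ f a b]
    · exact φ.map_one

theorem map_dProd (φ : M →* N) (f : ℕ → M) (a : ℕ) :
    ∀ b, φ (dProd f a b) = dProd (fun j => φ (f j)) a b
  | 0 => φ.map_one
  | b + 1 => by
    simp only [dProd]
    split_ifs
    · rw [φ.map_mul, map_dProd φ f a b]
    · exact φ.map_one

theorem aProd_inv_mul_dProd {K : Type*} [Group K] (t : ℕ → K) (i : ℕ) :
    ∀ {n}, i < n → aProd (fun j => (t j)⁻¹) (i+1) n * dProd t i n = t i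
  | 0, h => absurd h (Nat.not_lt_zero i)
  | n + 1, h => by
    simp only [aProd, dProd]
    rcases Nat.lt_succ_iff_lt_or_eq.mp h with hin | rfl
    · rw [if_pos (show i + 1 ≤ n by omega), if_pos (show i ≤ n by omega), mul_assoc,
        inv_mul_cancel_left, aProd_inv_mul_dProd t i hin]
    · rw [if_neg (by omega), if_pos le_rfl, dProd_self, one_mul, mul_one]

end Prods

def ιOH (i n : ℕ) : Fin (i+1) →o Fin (n+1) where
  toFun k := ⟨min k n, Nat.lt_succ_of_le (Nat.min_le_right _ _)⟩
  monotone' a b (h : (a : ℕ) ≤ b) := by simp only [Fin.mk_le_mk]; omega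

def dcompOH (i c N : ℕ) : Fin (N-c+1) →o Fin (N+1) where
  toFun k := ⟨min (if (k:ℕ) ≤ i then k else k + c) N, Nat.lt_succ_of_le (Nat.min_le_right _ _)⟩
  monotone' a b (h : (a : ℕ) ≤ b) := by simp only [Fin.mk_le_mk]; split_ifs <;> omega

def scompOH (i c M : ℕ) : Fin (M+c+1) →o Fin (M+1) where
  toFun k := ⟨min (if (k:ℕ) ≤ i then k else max i (k - c)) M,
    Nat.lt_succ_of_le (Nat.min_le_right _ _)⟩
  monotone' a b (h : (a : ℕ) ≤ b) := by simp only [Fin.mk_le_mk]; split_ifs <;> omega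

def dsOH (i j n : ℕ) : Fin (n+1) →o Fin (n+1) where
  toFun k := ⟨min (if (k:ℕ) ≤ i then k else if (k:ℕ) ≤ j then i else k) n,
    Nat.lt_succ_of_le (Nat.min_le_right _ _)⟩
  monotone' a b (h : (a : ℕ) ≤ b) := by simp only [Fin.mk_le_mk]; split_ifs <;> omega

def dsToOH (i n j : ℕ) : Fin (n+1) →o Fin (j+1) where
  toFun k := ⟨min (min k i) j, Nat.lt_succ_of_le (Nat.min_le_right _ _)⟩
  monotone' a b (h : (a : ℕ) ≤ b) := by simp only [Fin.mk_le_mk]; omega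

theorem ιOH_val (i n : ℕ) (k : Fin (i+1)) : (ιOH i n k : ℕ) = min (k:ℕ) n := rfl

theorem dcompOH_val (i c N : ℕ) (k : Fin (N-c+1)) :
    (dcompOH i c N k : ℕ) = min (if (k:ℕ) ≤ i then (k:ℕ) else k + c) N := rfl

theorem scompOH_val (i c M : ℕ) (k : Fin (M+c+1)) :
    (scompOH i c M k : ℕ) = min (if (k:ℕ) ≤ i then (k:ℕ) else max i (k - c)) M := rfl

theorem dsOH_val (i j n : ℕ) (k : Fin (n+1)) :
    (dsOH i j n k : ℕ) = min (if (k:ℕ) ≤ i then (k:ℕ) else if (k:ℕ) ≤ j then i else k) n := rfl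

theorem dsToOH_val (i n j : ℕ) (k : Fin (n+1)) : (dsToOH i n j k : ℕ) = min (min (k:ℕ) i) j := rfl

theorem ιOH_self (i : ℕ) : ιOH i i = OrderHom.id := by
  ext k; rw [ιOH_val]; exact min_eq_left k.is_le

theorem ιOH_comp_ιOH {i j : ℕ} (n : ℕ) (hij : i ≤ j) : (ιOH j n).comp (ιOH i j) = ιOH i n := by
  ext k; simp only [OrderHom.comp_coe, Function.comp_apply, ιOH_val]; omega

theorem dsOH_comp_ιOH (i j n : ℕ) : (dsOH i j n).comp (ιOH i n) = ιOH i n := by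
  ext k
  rw [OrderHom.comp_coe, Function.comp_apply, dsOH_val, ιOH_val]
  have := k.is_le
  split_ifs <;> omega

theorem dsToOH_comp_ιOH {i n : ℕ} (j : ℕ) (hin : i ≤ n) :
    (dsToOH i n j).comp (ιOH i n) = ιOH i j := by
  ext k; simp only [OrderHom.comp_coe, Function.comp_apply, dsToOH_val, ιOH_val]; omega

theorem δOH_val (k a b : ℕ) (p : Fin (a+1)) :
    (δOH k a b p : ℕ) = min (if (p:ℕ) < k then (p:ℕ) else p + 1) b := rfl

theorem σOH_val (k a b : ℕ) (p : Fin (a+1)) :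
    (σOH k a b p : ℕ) = min (if (p:ℕ) ≤ k then (p:ℕ) else p - 1) b := rfl

namespace SGrp
variable (G : SGrp)

def mapHom {m n : ℕ} (θ : Fin (m+1) →o Fin (n+1)) : G.obj n →* G.obj m :=
  MonoidHom.mk' (G.map θ) (G.map_mul θ)

theorem mapHom_apply {m n : ℕ} (θ : Fin (m+1) →o Fin (n+1)) (x : G.obj n) :
    G.mapHom θ x = G.map θ x := rfl

theorem map_inv {m n : ℕ} (θ : Fin (m+1) →o Fin (n+1)) (x : G.obj n) :
    G.map θ x⁻¹ = (G.map θ x)⁻¹ :=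
  (G.mapHom θ).map_inv x

theorem map_eq_self {N : ℕ} {θ : Fin (N+1) →o Fin (N+1)} (hθ : ∀ k, (θ k : ℕ) = k)
    (x : G.obj N) : G.map θ x = x := by
  rw [show θ = OrderHom.id by ext k; exact hθ k, G.map_id]

theorem gcast_map {a b n : ℕ} (h : a = b) {θ : Fin (a+1) →o Fin (n+1)}
    {θ' : Fin (b+1) →o Fin (n+1)} (hθ : ∀ k, (θ k : ℕ) = θ' (Fin.cast (by rw [h]) k))
    (x : G.obj n) : G.gcast b (G.map θ x) = G.map θ' x := by
  subst h
  rw [gcast, dif_pos rfl, show θ = θ' by ext k; exact hθ k]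

theorem dcomp_eq_map : ∀ (c : ℕ) {i N : ℕ}, i + c ≤ N → ∀ x : G.obj N,
    G.dcomp i c x = G.map (dcompOH i c N) x
  | 0, i, N, _, x => (G.map_eq_self (fun k => by rw [dcompOH_val]; split_ifs <;> omega) x).symm
  | c + 1, i, N, h, x => by
    show G.face (i+1) (G.dcomp (i+1) c x) = _
    rw [dcomp_eq_map c (by omega), face, G.map_comp]
    congr 1
    ext k
    rw [OrderHom.comp_coe, Function.comp_apply, dcompOH_val, δOH_val, dcompOH_val]
    split_ifs <;> omega

theorem scomp_eq_map : ∀ (c : ℕ) {i M : ℕ}, i ≤ M → ∀ x : G.obj M,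
    G.scomp i c x = G.map (scompOH i c M) x
  | 0, i, M, _, x => (G.map_eq_self (fun k => by rw [scompOH_val]; split_ifs <;> omega) x).symm
  | c + 1, i, M, h, x => by
    show G.deg (i+c) (G.scomp i c x) = _
    rw [scomp_eq_map c h, deg, G.map_comp]
    congr 1
    ext k
    rw [OrderHom.comp_coe, Function.comp_apply, scompOH_val, σOH_val, scompOH_val]
    split_ifs <;> omega

theorem ds_eq_map {i j n : ℕ} (hij : i ≤ j) (hjn : j ≤ n) (x : G.obj n) :
    G.ds i j x = G.map (dsOH i j n) x := by
  rw [ds, min_eq_left (show j - i ≤ n by omega), G.dcomp_eq_map _ (by omega),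
    G.scomp_eq_map _ (by omega), G.map_comp]
  refine G.gcast_map (by omega) (fun k => ?_) x
  rw [OrderHom.comp_coe, Function.comp_apply, dcompOH_val, scompOH_val, dsOH_val, Fin.val_cast]
  split_ifs <;> omega

theorem dsTo_eq_map {i j n : ℕ} (hij : i ≤ j) (hin : i ≤ n) (x : G.obj j) :
    G.dsTo i n x = G.map (dsToOH i n j) x := by
  rw [dsTo, G.dcomp_eq_map _ (by omega), G.gcast_map (by omega) (θ' := ιOH i j)
    (fun k => by rw [dcompOH_val, ιOH_val, Fin.val_cast]; split_ifs <;> omega),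
    G.scomp_eq_map _ le_rfl, G.map_comp]
  refine G.gcast_map (by omega) (fun k => ?_) x
  rw [OrderHom.comp_coe, Function.comp_apply, ιOH_val, scompOH_val, dsToOH_val, Fin.val_cast]
  split_ifs <;> omega

theorem DGn_apply (n : ℕ) (x : Fin n → G.obj n) (i : Fin n) :
    G.DGn n x i = G.map (ιOH i n) (x i) := by
  rw [DGn, G.dcomp_eq_map _ (by omega)]
  refine G.gcast_map (by omega) (fun k => ?_) (x i)
  rw [dcompOH_val, ιOH_val, Fin.val_cast]
  split_ifs <;> omega

theorem map_ιOH_yAux (n : ℕ) (g : ∀ j, G.obj j) :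
    ∀ fuel {i}, i < n → n ≤ fuel + i → G.map (ιOH i n) (G.yAux n g fuel i) = g i
  | 0, i, hi, hf => absurd hf (by omega)
  | fuel + 1, i, hi, hf => by
    have restrict_ds : ∀ j, i + 1 ≤ j → j < n →
        G.map (ιOH i n) (G.ds i j (G.yAux n g fuel j)⁻¹) = (G.map (ιOH i j) (g j))⁻¹ := by
      intro j hij hjn
      rw [G.ds_eq_map (by omega) hjn.le, G.map_comp, dsOH_comp_ιOH,
        ← ιOH_comp_ιOH n (Nat.le_of_succ_le hij), ← G.map_comp,
        G.map_inv, map_ιOH_yAux n g fuel hjn (by omega), G.map_inv]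
    have restrict_dsTo : ∀ j, i ≤ j → j < n →
        G.map (ιOH i n) (G.dsTo i n (g j)) = G.map (ιOH i j) (g j) := by
      intro j hij hjn
      rw [G.dsTo_eq_map hij hi.le, G.map_comp, dsToOH_comp_ιOH j hi.le]
    rw [yAux, ← mapHom_apply, _root_.map_mul, map_aProd, map_dProd]
    simp only [mapHom_apply]
    rw [aProd_congr restrict_ds, dProd_congr restrict_dsTo,
      aProd_inv_mul_dProd (fun j => G.map (ιOH i j) (g j)) i hi, ιOH_self, G.map_id]

end SGrp

end Paper

open Paper Paper.SGrp in
/-- `S_G` is a section of `D_G`, i.e. `(S_G)_n (D_G)_n = id` for all `n`;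
in particular `D_G` is a retraction. -/
theorem stmt_10 (G : SGrp) (n : ℕ) (g : G.WbarN n) : G.DGn n (G.SGn n g) = g := by
  funext i
  rw [DGn_apply, SGn, map_ιOH_yAux G n (G.gE g) n i.isLt (by omega), gE, dif_pos i.isLt]
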